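/- Suppose p + q ≠ 1 and set r = 1 - p - q. Then g_0(n,n) = (1-p)^n for all n ≥ 0, and for every n ≥ 1 and 0 ≤ k ≤ n-1, g_0(n,k) = p (1-q)^{n-(2k+1)} Σ_{j=0}^{min(k, n-k)} C(n-k, j) C(n-j, k-j) (1 - (j/(n-k)) q) (1-q)^{k-j} (1-p)^{k-j} (-r)^j, where C(·,·) denotes binomial coefficients and (1-q)^{n-(2k+1)} is the real power zpow with possibly negative integer exponent. -/

import Mathlib

open Matrix Finset

/-- Transition matrix of the two-state chain with parameters `p`, `q`. -/
noncomputable def twoStateP (p q : ℝ) : Matrix (Fin 2) (Fin 2) ℝ :=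
  !![1 - p, p; q, 1 - q]

/-- `g2 p q i n k` is the probability that the two-state chain started at `i`
spends exactly `k` of the times `1,…,n` in state `0`. -/
noncomputable def g2 (p q : ℝ) (i : Fin 2) (n k : ℕ) : ℝ :=
  ∑ x ∈ Finset.univ.filter
      (fun x : Fin (n + 1) → Fin 2 => x 0 = i ∧
        (Finset.univ.filter (fun m : Fin n => x m.succ = 0)).card = k),
    ∏ m : Fin n, twoStateP p q (x m.castSucc) (x m.succ)
def m2 (n k j : ℕ) : ℕ :=
  (n - k).choose j * (n - 1 - j).choose (n - k) + (k - 1).choose j * (n - 1 - j).choose k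

lemma pascal' {m l : ℕ} (hm : 1 ≤ m) (hl : 1 ≤ l) :
    m.choose l = (m - 1).choose (l - 1) + (m - 1).choose l := by
  obtain ⟨m0, rfl⟩ : ∃ m0, m = m0 + 1 := ⟨m - 1, by omega⟩
  obtain ⟨l0, rfl⟩ : ∃ l0, l = l0 + 1 := ⟨l - 1, by omega⟩
  simp [Nat.choose_succ_succ']

lemma m2_kk {n k : ℕ} (hk : 1 ≤ k) (hkn : k ≤ n) : m2 n k k = 0 := by
  unfold m2
  rcases eq_or_lt_of_le hkn with h | h
  · subst h
    rw [Nat.choose_eq_zero_of_lt (by omega : k - 1 < k)]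
    simp [Nat.choose_eq_zero_of_lt (show (0:ℕ) < k by omega)]
  · rw [Nat.choose_eq_zero_of_lt (by omega : k - 1 < k),
      Nat.choose_eq_zero_of_lt (by omega : n - 1 - k < n - k)]
    simp

lemma m2_zero {n k : ℕ} (hk : 1 ≤ k) (hkn : k ≤ n) : m2 n k 0 = n.choose k := by
  unfold m2
  simp only [Nat.choose_zero_right, one_mul, Nat.sub_zero]
  have h1 : (n - 1).choose (n - k) = (n - 1).choose (k - 1) := by
    rw [show n - k = (n - 1) - (k - 1) by omega]
    exact Nat.choose_symm (by omega)
  have h2 := pascal' (show 1 ≤ n by omega) hk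
  omega

lemma tri1 {n k i : ℕ} (hk : 1 ≤ k) (hkn : k ≤ n) (hik : i < k) :
    (n - k).choose (i+1) * (n - 1 - i).choose (n - k) =
      k.choose (i+1) * (n - 1 - i).choose k := by
  by_cases h1 : n - k < i + 1
  · rw [Nat.choose_eq_zero_of_lt h1, Nat.choose_eq_zero_of_lt (by omega : n - 1 - i < k)]
    simp
  · push_neg at h1
    have e1 := Nat.choose_mul (n := n - 1 - i) (show i+1 ≤ n - k from h1)
    have e2 := Nat.choose_mul (n := n - 1 - i) (show i+1 ≤ k by omega)
    have e3 : (n - 1 - i - (i+1)).choose (n - k - (i+1)) =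
        (n - 1 - i - (i+1)).choose (k - (i+1)) := by
      rw [show n - k - (i+1) = (n - 1 - i - (i+1)) - (k - (i+1)) by omega]
      exact Nat.choose_symm (by omega)
    calc (n - k).choose (i+1) * (n - 1 - i).choose (n - k)
        = (n - 1 - i).choose (n - k) * (n - k).choose (i+1) := mul_comm _ _
      _ = (n - 1 - i).choose (i+1) * (n - 1 - i - (i+1)).choose (n - k - (i+1)) := e1
      _ = (n - 1 - i).choose (i+1) * (n - 1 - i - (i+1)).choose (k - (i+1)) := by rw [e3]
      _ = (n - 1 - i).choose k * k.choose (i+1) := e2.symm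
      _ = k.choose (i+1) * (n - 1 - i).choose k := mul_comm _ _

lemma tri2 {n k i : ℕ} (hk : 1 ≤ k) (hkn : k ≤ n) (hik : i + 1 ≤ k) :
    (k - 1).choose (i+1) * (n - 2 - i).choose (k - 1) =
      (n - k).choose (i+1) * (n - 2 - i).choose (n - k) := by
  by_cases h0 : k - 1 < i + 1
  · rw [Nat.choose_eq_zero_of_lt h0]
    rcases eq_or_lt_of_le hkn with h | h
    · rw [Nat.choose_eq_zero_of_lt (by omega : n - k < i + 1)]
      simp
    · rw [Nat.choose_eq_zero_of_lt (by omega : n - 2 - i < n - k), mul_zero, zero_mul]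
  · push_neg at h0
    by_cases h1 : n - k < i + 1
    · rw [Nat.choose_eq_zero_of_lt h1, Nat.choose_eq_zero_of_lt (by omega : n - 2 - i < k - 1)]
      simp
    · push_neg at h1
      have e1 := Nat.choose_mul (n := n - 2 - i) (show i+1 ≤ k - 1 from h0)
      have e2 := Nat.choose_mul (n := n - 2 - i) (show i+1 ≤ n - k from h1)
      have e3 : (n - 2 - i - (i+1)).choose (k - 1 - (i+1)) =
          (n - 2 - i - (i+1)).choose (n - k - (i+1)) := by
        rw [show k - 1 - (i+1) = (n - 2 - i - (i+1)) - (n - k - (i+1)) by omega]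
        exact Nat.choose_symm (by omega)
      calc (k-1).choose (i+1) * (n - 2 - i).choose (k-1)
          = (n - 2 - i).choose (k-1) * (k-1).choose (i+1) := mul_comm _ _
        _ = (n - 2 - i).choose (i+1) * (n - 2 - i - (i+1)).choose (k - 1 - (i+1)) := e1
        _ = (n - 2 - i).choose (i+1) * (n - 2 - i - (i+1)).choose (n - k - (i+1)) := by rw [e3]
        _ = (n - 2 - i).choose (n-k) * (n-k).choose (i+1) := e2.symm
        _ = (n - k).choose (i+1) * (n - 2 - i).choose (n - k) := mul_comm _ _

lemma natN2 {n k i : ℕ} (hk : 1 ≤ k) (hkn : k ≤ n) (hik : i < k) :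
    (n - k).choose i * (n - 1 - i).choose (n - k) + k.choose (i+1) * (n - 1 - i).choose k =
      m2 n k i + m2 n k (i+1) := by
  have hpk : k.choose (i+1) = (k-1).choose i + (k-1).choose (i+1) := by
    have := pascal' hk (show 1 ≤ i + 1 by omega)
    rwa [Nat.add_sub_cancel] at this
  unfold m2
  rw [show n - 1 - (i+1) = n - 2 - i by omega, hpk]
  by_cases h2 : i + 2 ≤ n
  · have hpn : (n - 1 - i).choose k = (n - 2 - i).choose (k-1) + (n - 2 - i).choose k := by
      have := pascal' (m := n - 1 - i) (l := k) (by omega) hk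
      rwa [show n - 1 - i - 1 = n - 2 - i by omega] at this
    rw [hpn]
    have t2 := tri2 (n := n) (k := k) (i := i) hk hkn (by omega)
    ring_nf
    ring_nf at t2
    omega
  · have hk2 : n = k := by omega
    subst hk2
    obtain ⟨n0, rfl⟩ : ∃ n0, n = n0 + 1 := ⟨n - 1, by omega⟩
    have hi0 : i = n0 := by omega
    subst hi0
    simp [Nat.sub_self, Nat.add_sub_cancel, show i + 1 - 1 - i = 0 by omega,
      Nat.choose_eq_zero_of_lt (show (0:ℕ) < i + 1 by omega)]

lemma natN1 {n k i : ℕ} (hk : 1 ≤ k) (hkn : k ≤ n) (hik : i < k) :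
    (n - k + 1).choose (i+1) * (n - 1 - i).choose (n - k) = m2 n k i + m2 n k (i+1) := by
  rw [Nat.choose_succ_succ', add_mul, ← natN2 hk hkn hik, tri1 hk hkn hik]

noncomputable def S0 (p q : ℝ) (n k : ℕ) : ℝ :=
  ∑ j ∈ Finset.range (min k (n - k) + 1),
    ((n - k).choose j : ℝ) * ((n - j).choose (k - j) : ℝ) *
      (1 - ((j : ℝ) / ((n - k : ℕ) : ℝ)) * q) *
      (1 - q) ^ (k - j) * (1 - p) ^ (k - j) * (-(1 - p - q)) ^ j

noncomputable def F0 (p q : ℝ) (n k : ℕ) : ℝ :=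
  if k = n then (1 - p) ^ n
  else p * (1 - q) ^ ((n : ℤ) - (2 * (k : ℤ) + 1)) * S0 p q n k

noncomputable def F1 (p q : ℝ) (n k : ℕ) : ℝ := if n < k then 0 else F0 q p n (n - k)

noncomputable def ccR (m j : ℕ) : ℝ := if j = 0 then 0 else ((m.choose (j - 1) : ℕ) : ℝ)

lemma rat1 {m j : ℕ} (hm : 1 ≤ m) (c : ℝ) :
    (1 - (j : ℝ) / (m : ℝ) * c) * (m.choose j : ℝ) =
      (m.choose j : ℝ) - c * ccR (m - 1) j := by
  rcases j with _ | i
  · simp [ccR]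
  · rw [ccR, if_neg (Nat.succ_ne_zero i), Nat.add_sub_cancel]
    have key : (m : ℝ) * ((m - 1).choose i : ℝ) = (m.choose (i + 1) : ℝ) * ((i : ℝ) + 1) := by
      have h := Nat.add_one_mul_choose_eq (m - 1) i
      rw [show m - 1 + 1 = m by omega] at h
      have := congrArg (Nat.cast : ℕ → ℝ) h
      push_cast at this
      linarith
    have hm0 : (m : ℝ) ≠ 0 := Nat.cast_ne_zero.mpr (by omega)
    have hdiv : ((i : ℝ) + 1) / (m : ℝ) * (m.choose (i+1) : ℝ) = ((m - 1).choose i : ℝ) := by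
      rw [div_mul_eq_mul_div, div_eq_iff hm0]
      linarith
    push_cast
    linear_combination (-c) * hdiv

lemma F0_big {p q : ℝ} {n k : ℕ} (h : n < k) : F0 p q n k = 0 := by
  unfold F0
  rw [if_neg (by omega)]
  have hS : S0 p q n k = 0 := by
    unfold S0
    rw [show n - k = 0 by omega, Nat.min_zero, Finset.sum_range_one]
    simp [Nat.choose_eq_zero_of_lt h]
  rw [hS, mul_zero]

lemma conv1 {p q : ℝ} {n k : ℕ} (hk : 1 ≤ k) (hkn : k ≤ n) :
    (1 - p) * S0 p q (n+1) k =
      ∑ j ∈ Finset.range (k+1),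
        (1 - p) * (((n - k + 1).choose j : ℝ) - q * ccR (n - k) j) *
          (((n - j + 1).choose (n - k + 1) : ℕ) : ℝ) *
          ((1 - q) * (1 - p)) ^ (k - j) * (-(1 - p - q)) ^ j := by
  unfold S0
  rw [Finset.mul_sum]
  have hsub : Finset.range (min k (n + 1 - k) + 1) ⊆ Finset.range (k + 1) := by
    intro j hj; simp only [Finset.mem_range] at *; omega
  rw [← Finset.sum_subset hsub ?vanish]
  case vanish =>
    intro j hj hj2
    simp only [Finset.mem_range] at hj hj2
    have h1 : n - k + 1 < j := by omega
    rw [Nat.choose_eq_zero_of_lt h1, ccR, if_neg (by omega),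
      Nat.choose_eq_zero_of_lt (by omega : n - k < j - 1)]
    norm_num
  refine Finset.sum_congr rfl fun j hj => ?_
  simp only [Finset.mem_range] at hj
  have hjk : j ≤ min k (n + 1 - k) := by omega
  have e1 : n + 1 - k = n - k + 1 := by omega
  have e2 : (n + 1 - j).choose (k - j) = (n - j + 1).choose (n - k + 1) := by
    rw [show n + 1 - j = (n - j) + 1 by omega,
      show n - k + 1 = ((n - j) + 1) - (k - j) by omega]
    exact (Nat.choose_symm (by omega)).symm
  rw [e1, e2]
  have hr := rat1 (m := n - k + 1) (j := j) (by omega) q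
  rw [Nat.add_sub_cancel] at hr
  rw [mul_pow, ← hr]
  ring

lemma conv2 {p q : ℝ} {n k : ℕ} (hk : 1 ≤ k) (hkn : k ≤ n) :
    (1 - p) * (1 - p) * (1 - q) * S0 p q n (k-1) =
      ∑ j ∈ Finset.range (k+1),
        (1 - p) * (((n - k + 1).choose j : ℝ) - q * ccR (n - k) j) *
          (((n - j).choose (n - k + 1) : ℕ) : ℝ) *
          ((1 - q) * (1 - p)) ^ (k - j) * (-(1 - p - q)) ^ j := by
  unfold S0
  rw [Finset.mul_sum]
  have hsub : Finset.range (min (k-1) (n - (k-1)) + 1) ⊆ Finset.range (k + 1) := by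
    intro j hj; simp only [Finset.mem_range] at *; omega
  rw [← Finset.sum_subset hsub ?vanish]
  case vanish =>
    intro j hj hj2
    simp only [Finset.mem_range] at hj hj2
    by_cases h1 : n - k + 1 < j
    · rw [Nat.choose_eq_zero_of_lt h1, ccR, if_neg (by omega),
        Nat.choose_eq_zero_of_lt (by omega : n - k < j - 1)]
      norm_num
    · have hjk : j = k := by omega
      rw [Nat.choose_eq_zero_of_lt (by omega : n - j < n - k + 1)]
      norm_num
  refine Finset.sum_congr rfl fun j hj => ?_
  simp only [Finset.mem_range] at hj
  have hjk : j ≤ min (k-1) (n - (k-1)) := by omega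
  have e1 : n - (k-1) = n - k + 1 := by omega
  have e2 : (n - j).choose (k - 1 - j) = (n - j).choose (n - k + 1) := by
    rw [show n - k + 1 = (n - j) - (k - 1 - j) by omega]
    exact (Nat.choose_symm (by omega)).symm
  rw [e1, e2]
  have hr := rat1 (m := n - k + 1) (j := j) (by omega) q
  rw [Nat.add_sub_cancel] at hr
  rw [mul_pow, ← hr, show k - j = (k - 1 - j) + 1 by omega, pow_succ, pow_succ]
  ring

lemma conv3 {p q : ℝ} {n k : ℕ} (hab : ((1:ℝ) - q) * (1 - p) ≠ 0)
    (hk : 1 ≤ k) (hkn : k ≤ n) :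
    q * ((1 - q) * (1 - p)) ^ (2 * (k:ℤ) - (n:ℤ)) * S0 q p n (n-k) =
      ∑ j ∈ Finset.range (k+1),
        q * ((k.choose j : ℝ) - p * ccR (k - 1) j) *
          (((n - j).choose k : ℕ) : ℝ) *
          ((1 - q) * (1 - p)) ^ (k - j) * (-(1 - p - q)) ^ j := by
  unfold S0
  rw [Finset.mul_sum]
  have hsub : Finset.range (min (n-k) (n - (n-k)) + 1) ⊆ Finset.range (k + 1) := by
    intro j hj; simp only [Finset.mem_range] at *; omega
  rw [← Finset.sum_subset hsub ?vanish]
  case vanish =>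
    intro j hj hj2
    simp only [Finset.mem_range] at hj hj2
    rw [Nat.choose_eq_zero_of_lt (by omega : n - j < k)]
    norm_num
  refine Finset.sum_congr rfl fun j hj => ?_
  simp only [Finset.mem_range] at hj
  have hjk : j ≤ min (n-k) (n - (n-k)) := by omega
  have e1 : n - (n - k) = k := by omega
  have e2 : (n - j).choose (n - k - j) = (n - j).choose k := by
    have h := Nat.choose_symm (show n - k - j ≤ n - j by omega)
    rw [show (n - j) - (n - k - j) = k by omega] at h
    exact h.symm
  rw [e1, e2]
  have hr := rat1 (m := k) (j := j) (by omega) p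
  have hz : ((1 - q) * (1 - p)) ^ (2 * (k:ℤ) - (n:ℤ)) *
      ((1 - q) * (1 - p)) ^ (n - k - j) = ((1 - q) * (1 - p)) ^ (k - j) := by
    rw [← zpow_natCast ((1 - q) * (1 - p)) (n - k - j),
      ← zpow_natCast ((1 - q) * (1 - p)) (k - j), ← zpow_add₀ hab]
    congr 1
    omega
  have hu : (-(1 - q - p) : ℝ) = -(1 - p - q) := by ring
  rw [hu, ← hr, ← hz, mul_pow]
  ring

lemma tele {p q : ℝ} {n k : ℕ} (hk : 1 ≤ k) (hkn : k ≤ n) :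
    ∑ j ∈ Finset.range (k+1),
      ((1 - p) * (((n - k + 1).choose j : ℝ) - q * ccR (n - k) j) *
          (((n - j + 1).choose (n - k + 1) : ℕ) : ℝ) *
          ((1 - q) * (1 - p)) ^ (k - j) * (-(1 - p - q)) ^ j
        - (1 - p) * (((n - k + 1).choose j : ℝ) - q * ccR (n - k) j) *
          (((n - j).choose (n - k + 1) : ℕ) : ℝ) *
          ((1 - q) * (1 - p)) ^ (k - j) * (-(1 - p - q)) ^ j
        - q * ((k.choose j : ℝ) - p * ccR (k - 1) j) *
          (((n - j).choose k : ℕ) : ℝ) *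
          ((1 - q) * (1 - p)) ^ (k - j) * (-(1 - p - q)) ^ j) = 0 := by
  set V : ℕ → ℝ := fun j =>
    (if j = 0 then 0 else (m2 n k (j-1) : ℝ)) *
      ((1 - q) * (1 - p)) ^ (k + 1 - j) * (-(1 - p - q)) ^ j with hV
  have hstep : ∀ j ∈ Finset.range (k+1),
      ((1 - p) * (((n - k + 1).choose j : ℝ) - q * ccR (n - k) j) *
          (((n - j + 1).choose (n - k + 1) : ℕ) : ℝ) *
          ((1 - q) * (1 - p)) ^ (k - j) * (-(1 - p - q)) ^ j
        - (1 - p) * (((n - k + 1).choose j : ℝ) - q * ccR (n - k) j) *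
          (((n - j).choose (n - k + 1) : ℕ) : ℝ) *
          ((1 - q) * (1 - p)) ^ (k - j) * (-(1 - p - q)) ^ j
        - q * ((k.choose j : ℝ) - p * ccR (k - 1) j) *
          (((n - j).choose k : ℕ) : ℝ) *
          ((1 - q) * (1 - p)) ^ (k - j) * (-(1 - p - q)) ^ j) = V j - V (j+1) := by
    intro j hj
    simp only [Finset.mem_range] at hj
    have hpas : ((n - j + 1).choose (n - k + 1) : ℝ)
        = ((n - j).choose (n - k) : ℝ) + ((n - j).choose (n - k + 1) : ℝ) := by
      rw [← Nat.cast_add, Nat.choose_succ_succ']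
    rcases j with _ | i
    · -- j = 0
      simp only [hV, ccR, if_pos rfl, Nat.choose_zero_right]
      have hsym : ((n).choose (n - k) : ℝ) = ((n).choose k : ℝ) := by
        rw [Nat.choose_symm hkn]
      have hm0 : ((m2 n k 0 : ℕ) : ℝ) = (n.choose k : ℝ) := by
        rw [m2_zero hk hkn]
      simp only [Nat.sub_zero] at hpas ⊢
      rw [hpas]
      simp only [if_neg (Nat.one_ne_zero), Nat.add_sub_cancel, pow_zero, pow_one,
        Nat.cast_one, eq_self_iff_true, if_true]
      linear_combination ((1-p) * ((1 - q) * (1 - p)) ^ k) * hsym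
        + (((1 - q) * (1 - p)) ^ k * (-(1-p-q))) * hm0
    · -- j = i+1
      have hik : i < k := by omega
      have h1 := natN1 hk hkn hik
      have h2 := natN2 hk hkn hik
      rw [show n - 1 - i = n - (i+1) by omega] at h1 h2
      have h3 : ((m2 n k i : ℕ) : ℝ) =
          ((n-k).choose i : ℝ) * ((n - (i+1)).choose (n-k) : ℝ)
            + ((k-1).choose i : ℝ) * ((n - (i+1)).choose k : ℝ) := by
        rw [show (m2 n k i : ℕ) = (n-k).choose i * (n - (i+1)).choose (n-k)
            + (k-1).choose i * (n - (i+1)).choose k by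
          unfold m2; rw [show n - 1 - i = n - (i+1) by omega]]
        push_cast; ring
      have h1r : (((n - k + 1).choose (i+1) : ℝ)) * ((n - (i+1)).choose (n-k) : ℝ)
          = (m2 n k i : ℝ) + (m2 n k (i+1) : ℝ) := by exact_mod_cast congrArg (Nat.cast : ℕ → ℝ) h1
      have h2r : ((n-k).choose i : ℝ) * ((n - (i+1)).choose (n-k) : ℝ)
            + (k.choose (i+1) : ℝ) * ((n - (i+1)).choose k : ℝ)
          = (m2 n k i : ℝ) + (m2 n k (i+1) : ℝ) := by exact_mod_cast congrArg (Nat.cast : ℕ → ℝ) h2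
      simp only [hV, ccR, if_neg (Nat.succ_ne_zero i), if_neg (Nat.succ_ne_zero (i+1)),
        Nat.add_sub_cancel]
      rw [hpas]
      rw [show k + 1 - (i+1) = (k - (i+1)) + 1 by omega, show k + 1 - (i+1+1) = k - (i+1) by omega]
      linear_combination ((1-p) * ((1 - q) * (1 - p)) ^ (k - (i+1)) * (-(1-p-q)) ^ (i+1)) * h1r
        - (q * ((1 - q) * (1 - p)) ^ (k - (i+1)) * (-(1-p-q)) ^ (i+1)) * h2r
        - (p * q * ((1 - q) * (1 - p)) ^ (k - (i+1)) * (-(1-p-q)) ^ (i+1)) * h3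
  rw [Finset.sum_congr rfl hstep, Finset.sum_range_sub']
  simp only [hV, if_pos rfl, zero_mul, if_neg (Nat.succ_ne_zero k), Nat.add_sub_cancel]
  rw [m2_kk hk hkn]
  norm_num

lemma keyS {p q : ℝ} {n k : ℕ} (hab : ((1:ℝ) - q) * (1 - p) ≠ 0)
    (hk : 1 ≤ k) (hkn : k ≤ n) :
    (1 - p) * S0 p q (n+1) k =
      (1 - p) * (1 - p) * (1 - q) * S0 p q n (k-1)
        + q * ((1 - q) * (1 - p)) ^ (2 * (k:ℤ) - (n:ℤ)) * S0 q p n (n-k) := by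
  have e := tele (p := p) (q := q) hk hkn
  rw [Finset.sum_sub_distrib, Finset.sum_sub_distrib, sub_sub, sub_eq_zero] at e
  rw [conv1 hk hkn, conv2 hk hkn, conv3 hab hk hkn]
  exact e

lemma L0 {p q : ℝ} (ha : (1:ℝ) - p ≠ 0) (hb : (1:ℝ) - q ≠ 0) (n k : ℕ) :
    F0 p q (n+1) k =
      (1 - p) * (if k = 0 then 0 else F0 p q n (k-1)) + p * F1 p q n k := by
  by_cases hk0 : k = 0
  · subst hk0
    rw [if_pos rfl, mul_zero, zero_add]
    unfold F1
    rw [if_neg (by omega), Nat.sub_zero]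
    unfold F0
    rw [if_neg (by omega), if_pos rfl]
    have hS : S0 p q (n+1) 0 = 1 := by
      unfold S0
      rw [show (0 ⊓ (n + 1 - 0) + 1) = 1 by omega, Finset.sum_range_one]
      norm_num
    rw [hS, mul_one, show ((n+1 : ℕ) : ℤ) - (2 * ((0:ℕ) : ℤ) + 1) = (n : ℤ) by push_cast; ring,
      zpow_natCast]
  · by_cases hkn : k ≤ n
    · -- main case
      have hk : 1 ≤ k := by omega
      rw [if_neg hk0]
      unfold F1
      rw [if_neg (by omega)]
      unfold F0
      rw [if_neg (by omega), if_neg (by omega), if_neg (by omega)]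
      have key := keyS (mul_ne_zero hb ha) hk hkn
      have hC : ∀ z : ℤ, ((1 - q) * (1 - p)) ^ z = (1 - q) ^ z * (1 - p) ^ z :=
        fun z => mul_zpow _ _ _
      apply mul_left_cancel₀
        (mul_ne_zero ha (zpow_ne_zero (2 * (k:ℤ) - (n:ℤ)) hb) :
          (1 - p) * (1 - q) ^ (2 * (k:ℤ) - (n:ℤ)) ≠ 0)
      have hBB : (1 - q) ^ (2 * (k:ℤ) - (n:ℤ)) * (1 - q) ^ (((n+1:ℕ) : ℤ) - (2 * (k:ℤ) + 1))
          = 1 := by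
        rw [← zpow_add₀ hb, show (2 * (k:ℤ) - (n:ℤ)) + (((n+1:ℕ) : ℤ) - (2 * (k:ℤ) + 1)) = 0
          by push_cast; ring]
        exact zpow_zero _
      have hBB2 : (1 - q) ^ (2 * (k:ℤ) - (n:ℤ)) * (1 - q) ^ ((n : ℤ) - (2 * ((k-1:ℕ):ℤ) + 1))
          = (1 - q) := by
        rw [← zpow_add₀ hb, show (2 * (k:ℤ) - (n:ℤ)) + ((n : ℤ) - (2 * ((k-1:ℕ):ℤ) + 1)) = 1
          by omega]
        exact zpow_one _
      have haw : (1 - p) ^ (2 * (k:ℤ) - (n:ℤ))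
          = (1 - p) ^ ((n : ℤ) - (2 * ((n-k:ℕ):ℤ) + 1)) * (1 - p) := by
        rw [← zpow_add_one₀ ha]
        congr 1
        omega
      calc ((1 - p) * (1 - q) ^ (2 * (k:ℤ) - (n:ℤ))) *
            (p * (1 - q) ^ (((n+1:ℕ) : ℤ) - (2 * (k:ℤ) + 1)) * S0 p q (n+1) k)
          = p * ((1 - q) ^ (2 * (k:ℤ) - (n:ℤ)) * (1 - q) ^ (((n+1:ℕ) : ℤ) - (2 * (k:ℤ) + 1)))
              * ((1 - p) * S0 p q (n+1) k) := by ring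
        _ = p * ((1 - p) * (1 - p) * (1 - q) * S0 p q n (k-1)
              + q * ((1 - q) * (1 - p)) ^ (2 * (k:ℤ) - (n:ℤ)) * S0 q p n (n-k)) := by
            rw [hBB, key]; ring
        _ = ((1 - p) * (1 - q) ^ (2 * (k:ℤ) - (n:ℤ))) *
            ((1 - p) * (p * (1 - q) ^ ((n : ℤ) - (2 * ((k-1:ℕ):ℤ) + 1)) * S0 p q n (k-1))
              + p * (q * (1 - p) ^ ((n : ℤ) - (2 * ((n-k:ℕ):ℤ) + 1)) * S0 q p n (n-k))) := by
            rw [hC]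
            linear_combination (- p * (1-p) * (1-p) * S0 p q n (k-1)) * hBB2
              + (p * q * S0 q p n (n-k) * (1 - q) ^ (2 * (k:ℤ) - (n:ℤ))) * haw
    · -- k > n
      by_cases hks : k = n + 1
      · subst hks
        rw [if_neg (by omega)]
        unfold F0 F1
        rw [if_pos rfl, Nat.add_sub_cancel, if_pos rfl, if_pos (by omega : n < n + 1)]
        ring
      · rw [if_neg hk0, F0_big (by omega), F0_big (by omega)]
        unfold F1
        rw [if_pos (by omega)]
        ring

lemma L1 {p q : ℝ} (ha : (1:ℝ) - p ≠ 0) (hb : (1:ℝ) - q ≠ 0) (n k : ℕ) :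
    F1 p q (n+1) k =
      q * (if k = 0 then 0 else F0 p q n (k-1)) + (1 - q) * F1 p q n k := by
  by_cases hk0 : k = 0
  · subst hk0
    rw [if_pos rfl, mul_zero, zero_add]
    unfold F1
    rw [if_neg (by omega), if_neg (by omega), Nat.sub_zero, Nat.sub_zero]
    unfold F0
    rw [if_pos rfl, if_pos rfl]
    ring
  · rw [if_neg hk0]
    by_cases hkn : k ≤ n
    · have hL := L0 hb ha n (n + 1 - k)
      unfold F1
      rw [if_neg (by omega), if_neg (by omega), hL, if_neg (by omega),
        show n + 1 - k - 1 = n - k by omega]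
      unfold F1
      rw [if_neg (by omega), show n - (n + 1 - k) = k - 1 by omega]
      ring
    · by_cases hks : k = n + 1
      · subst hks
        unfold F1
        rw [if_neg (by omega), if_pos (by omega), Nat.sub_self, mul_zero, add_zero]
        have hL := L0 hb ha n 0
        rw [hL, if_pos rfl, mul_zero, zero_add]
        unfold F1
        rw [if_neg (by omega), Nat.sub_zero]
        unfold F0
        rw [Nat.add_sub_cancel, if_pos rfl]
      · unfold F1
        rw [if_pos (by omega), if_pos (by omega), F0_big (by omega)]
        ring

lemma fin2cases : ∀ b : Fin 2, b = 0 ∨ b = 1 := by decide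

lemma g2_zero (p q : ℝ) (i : Fin 2) (k : ℕ) : g2 p q i 0 k = if k = 0 then 1 else 0 := by
  unfold g2
  rw [Finset.sum_filter]
  rw [← Equiv.sum_comp (Equiv.funUnique (Fin 1) (Fin 2)).symm]
  simp only [Equiv.funUnique_symm_apply]
  rw [Fin.sum_univ_two]
  have : ∀ a : Fin 2, (Finset.univ.filter
      (fun m : Fin 0 => (fun _ : Fin 1 => a) m.succ = 0)).card = 0 := by
    intro a; simp
  rcases Nat.eq_zero_or_pos k with hk | hk
  · subst hk
    fin_cases i <;> simp [this]
  · have hk' : k ≠ 0 := by omega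
    fin_cases i <;> simp [this, hk'] <;> omega

lemma g2_succ (p q : ℝ) (i : Fin 2) (n k : ℕ) :
    g2 p q i (n+1) k =
      twoStateP p q i 0 * (if k = 0 then 0 else g2 p q 0 n (k-1))
        + twoStateP p q i 1 * g2 p q 1 n k := by
  have step1 : g2 p q i (n+1) k =
      ∑ y : Fin (n+1) → Fin 2,
        (if ((if y 0 = 0 then 1 else 0) +
            (Finset.univ.filter (fun m : Fin n => y m.succ = 0)).card = k) then
          twoStateP p q i (y 0) *
            ∏ m : Fin n, twoStateP p q (y m.castSucc) (y m.succ)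
        else 0) := by
    unfold g2
    rw [Finset.sum_filter]
    rw [← Equiv.sum_comp (Fin.consEquiv fun _ : Fin (n+1+1) => Fin 2)]
    rw [Fintype.sum_prod_type, Finset.sum_comm]
    refine Finset.sum_congr rfl fun y _ => ?_
    have hconv : ∀ a : Fin 2,
        (if ((Fin.consEquiv fun _ : Fin (n+1+1) => Fin 2) (a, y) 0 = i ∧
            (Finset.univ.filter (fun m : Fin (n+1) =>
              ((Fin.consEquiv fun _ : Fin (n+1+1) => Fin 2) (a, y)) m.succ = 0)).card = k) then
          ∏ m : Fin (n+1), twoStateP p q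
            (((Fin.consEquiv fun _ : Fin (n+1+1) => Fin 2) (a, y)) m.castSucc)
            (((Fin.consEquiv fun _ : Fin (n+1+1) => Fin 2) (a, y)) m.succ)
        else 0) =
        (if (a = i ∧ (if y 0 = 0 then 1 else 0) +
            (Finset.univ.filter (fun m : Fin n => y m.succ = 0)).card = k) then
          twoStateP p q a (y 0) *
            ∏ m : Fin n, twoStateP p q (y m.castSucc) (y m.succ)
        else 0) := by
      intro a
      simp only [Fin.consEquiv_apply, Fin.cons_zero, Fin.cons_succ]
      have e2 : (Finset.univ.filter (fun m : Fin (n+1) => y m = 0)).card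
          = (if y 0 = 0 then 1 else 0) +
            (Finset.univ.filter (fun m : Fin n => y m.succ = 0)).card := by
        rw [Finset.card_filter, Fin.sum_univ_succ, Finset.card_filter]
      have e3 : (∏ x : Fin (n+1), twoStateP p q
            (Fin.cons (α := fun _ : Fin (n+1+1) => Fin 2) a y x.castSucc) (y x)) =
          twoStateP p q a (y 0) * ∏ m : Fin n, twoStateP p q (y m.castSucc) (y m.succ) := by
        rw [Fin.prod_univ_succ]
        simp only [Fin.castSucc_zero, Fin.cons_zero, ← Fin.succ_castSucc, Fin.cons_succ]
      rw [e2, e3]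
    simp only [hconv, ite_and]
    rw [Finset.sum_ite_eq' Finset.univ i]
    simp
  rw [step1]
  have split : ∀ y : Fin (n+1) → Fin 2,
      (if ((if y 0 = 0 then 1 else 0) +
          (Finset.univ.filter (fun m : Fin n => y m.succ = 0)).card = k) then
        twoStateP p q i (y 0) * ∏ m : Fin n, twoStateP p q (y m.castSucc) (y m.succ)
      else 0) =
      (if (y 0 = 0 ∧ 1 + (Finset.univ.filter (fun m : Fin n => y m.succ = 0)).card = k) then
        twoStateP p q i 0 * ∏ m : Fin n, twoStateP p q (y m.castSucc) (y m.succ)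
      else 0) +
      (if (y 0 = 1 ∧ (Finset.univ.filter (fun m : Fin n => y m.succ = 0)).card = k) then
        twoStateP p q i 1 * ∏ m : Fin n, twoStateP p q (y m.castSucc) (y m.succ)
      else 0) := by
    intro y
    rcases fin2cases (y 0) with h | h <;> rw [h] <;> simp
  simp only [split]
  rw [Finset.sum_add_distrib]
  congr 1
  · -- first piece = P i 0 * (if k = 0 then 0 else g2 0 n (k-1))
    rcases k with _ | k0
    · rw [if_pos rfl, mul_zero]
      refine Finset.sum_eq_zero fun y _ => ?_
      rw [if_neg (by omega)]
    · rw [if_neg (by omega)]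
      unfold g2
      rw [Finset.sum_filter, Finset.mul_sum]
      refine Finset.sum_congr rfl fun y _ => ?_
      rw [mul_ite, mul_zero]
      refine if_congr ?_ rfl rfl
      constructor <;> rintro ⟨h1, h2⟩ <;> exact ⟨h1, by omega⟩
  · unfold g2
    rw [Finset.sum_filter, Finset.mul_sum]
    refine Finset.sum_congr rfl fun y _ => ?_
    by_cases h : y 0 = 1 ∧ (Finset.univ.filter (fun m : Fin n => y m.succ = 0)).card = k
    · rw [if_pos h, if_pos h]
    · rw [if_neg h, if_neg h, mul_zero]

lemma tsP00 (p q : ℝ) : twoStateP p q 0 0 = 1 - p := rfl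
lemma tsP01 (p q : ℝ) : twoStateP p q 0 1 = p := rfl
lemma tsP10 (p q : ℝ) : twoStateP p q 1 0 = q := rfl
lemma tsP11 (p q : ℝ) : twoStateP p q 1 1 = 1 - q := rfl

lemma g2_eq {p q : ℝ} (ha : (1:ℝ) - p ≠ 0) (hb : (1:ℝ) - q ≠ 0) :
    ∀ n k : ℕ, g2 p q 0 n k = F0 p q n k ∧ g2 p q 1 n k = F1 p q n k := by
  intro n
  induction n with
  | zero =>
    intro k
    constructor
    · rw [g2_zero]
      rcases Nat.eq_zero_or_pos k with hk | hk
      · subst hk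
        unfold F0
        rw [if_pos rfl, if_pos rfl, pow_zero]
      · rw [if_neg (by omega), F0_big (by omega)]
    · rw [g2_zero]
      unfold F1
      rcases Nat.eq_zero_or_pos k with hk | hk
      · subst hk
        rw [if_pos rfl, if_neg (by omega), Nat.sub_zero]
        unfold F0
        rw [if_pos rfl, pow_zero]
      · rw [if_neg (by omega), if_pos (by omega)]
  | succ n ih =>
    intro k
    have e : (if k = 0 then 0 else g2 p q 0 n (k-1)) =
        (if k = 0 then 0 else F0 p q n (k-1)) := by
      by_cases hk : k = 0 <;> simp [hk, (ih (k-1)).1]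
    constructor
    · rw [g2_succ, tsP00, tsP01, e, (ih k).2, ← L0 ha hb]
    · rw [g2_succ, tsP10, tsP11, e, (ih k).2, ← L1 ha hb]

theorem stmt8 (p q : ℝ) (hp : p ∈ Set.Ioo (0 : ℝ) 1) (hq : q ∈ Set.Ioo (0 : ℝ) 1)
    (hpq : p + q ≠ 1) (r : ℝ) (hr : r = 1 - p - q) :
    (∀ n : ℕ, g2 p q 0 n n = (1 - p) ^ n) ∧
    ∀ n : ℕ, 1 ≤ n → ∀ k : ℕ, k ≤ n - 1 →
      g2 p q 0 n k =
        p * (1 - q) ^ ((n : ℤ) - (2 * (k : ℤ) + 1)) *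
          ∑ j ∈ Finset.range (min k (n - k) + 1),
            ((n - k).choose j : ℝ) * ((n - j).choose (k - j) : ℝ) *
              (1 - ((j : ℝ) / ((n - k : ℕ) : ℝ)) * q) *
              (1 - q) ^ (k - j) * (1 - p) ^ (k - j) * (-r) ^ j := by
  obtain ⟨hp0, hp1⟩ := hp
  obtain ⟨hq0, hq1⟩ := hq
  have ha : (1:ℝ) - p ≠ 0 := by intro h; linarith
  have hb : (1:ℝ) - q ≠ 0 := by intro h; linarith
  subst hr
  constructor
  · intro n
    rw [(g2_eq ha hb n n).1]
    unfold F0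
    rw [if_pos rfl]
  · intro n hn k hk
    have hkn : ¬ k = n := by omega
    rw [(g2_eq ha hb n k).1]
    unfold F0 S0
    rw [if_neg hkn]
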